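/- arXiv:2511.11545 — 2 statements merged into one kernel-verified Lean document; each statement's English description precedes it below -/
import Mathlib

section
/- With the definitions č_N(x*,u) := max over samples (xᵢ,u,xᵢ⁺) in D_N of (xᵢ⁺ - L·‖xᵢ-x*‖·𝟙) - h and f̂_N(x*,u) := min over samples of (xᵢ⁺ + L·‖xᵢ-x*‖·𝟙) - l, for every sample set D_N containing at least one sample with input u, we have č_N(x*,u) ≤ f(x*,u) ≤ f̂_N(x*,u) componentwise. -/
/-! Each sample with input `u` pins `f(x*, u)` down to within `L‖xᵢ - x*‖` of `f(xᵢ, u)` by the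
Lipschitz bound, and the observation `xᵢ⁺ = f(xᵢ, u) + wᵢ` locates `f(xᵢ, u)` in `xᵢ⁺ - [l, h]`.
Every sample therefore yields one lower and one upper bound on `f(x*, u)`; the best of them are the
maximum and the minimum over the samples. -/

section Observation

variable {E ι : Type*} [SeminormedAddCommGroup E] [Fintype ι]
  {g : E → ι → ℝ} {L : ℝ} {x xstar : E} {y w l h : ι → ℝ}

theorem abs_apply_sub_apply_le_of_norm_sub_le (hg : ‖g x - g xstar‖ ≤ L * ‖x - xstar‖) (i : ι) :
    |g x i - g xstar i| ≤ L * ‖x - xstar‖ :=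
  calc |g x i - g xstar i| = ‖(g x - g xstar) i‖ := (Real.norm_eq_abs _).symm
    _ ≤ ‖g x - g xstar‖ := norm_le_pi_norm _ i
    _ ≤ L * ‖x - xstar‖ := hg

theorem observation_bounds_apply (hg : ‖g x - g xstar‖ ≤ L * ‖x - xstar‖)
    (hw : ∀ i, l i ≤ w i ∧ w i ≤ h i) (hy : y = g x + w) (i : ι) :
    y i - L * ‖x - xstar‖ ≤ g xstar i + h i ∧ g xstar i + l i ≤ y i + L * ‖x - xstar‖ := by
  have hgi := abs_le.mp (abs_apply_sub_apply_le_of_norm_sub_le hg i)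
  have hyi : y i = g x i + w i := by rw [hy, Pi.add_apply]
  obtain ⟨hli, hhi⟩ := hw i
  constructor <;> linarith [hgi.1, hgi.2]

end Observation

/-- the data-driven lower bound `č_N` and upper bound `f̂_N`
(componentwise max/min over the samples of `D_N` with input `u`) bound the
true dynamics `f(x*, u)` componentwise. -/
theorem stmt1 {n : ℕ} {U : Type*} [DecidableEq U]
    (f : (Fin n → ℝ) → U → (Fin n → ℝ)) (L : ℝ)
    (hLip : ∀ x y u, ‖f x u - f y u‖ ≤ L * ‖x - y‖)
    (l h : Fin n → ℝ)
    (D : Finset ((Fin n → ℝ) × U × (Fin n → ℝ))) (u : U)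
    (hD : (D.filter (fun p => p.2.1 = u)).Nonempty)
    (hobs : ∀ p ∈ D, ∃ w : Fin n → ℝ, (∀ i, l i ≤ w i ∧ w i ≤ h i) ∧
      p.2.2 = f p.1 p.2.1 + w)
    (xstar : Fin n → ℝ) :
    ∀ i, (D.filter (fun p => p.2.1 = u)).sup' hD
            (fun p => p.2.2 i - L * ‖p.1 - xstar‖) - h i ≤ f xstar u i ∧
         f xstar u i ≤ (D.filter (fun p => p.2.1 = u)).inf' hD
            (fun p => p.2.2 i + L * ‖p.1 - xstar‖) - l i := by
  intro i
  have sample_bounds : ∀ p ∈ D.filter (fun p => p.2.1 = u),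
      p.2.2 i - L * ‖p.1 - xstar‖ ≤ f xstar u i + h i ∧
      f xstar u i + l i ≤ p.2.2 i + L * ‖p.1 - xstar‖ := by
    rintro p hp
    obtain ⟨hpD, rfl⟩ := Finset.mem_filter.mp hp
    obtain ⟨w, hw, hy⟩ := hobs p hpD
    exact observation_bounds_apply (g := fun x => f x p.2.1) (hLip _ _ _) hw hy i
  constructor
  · rw [sub_le_iff_le_add]
    exact Finset.sup'_le _ _ fun p hp => (sample_bounds p hp).1
  · rw [le_sub_iff_add_le]
    exact Finset.le_inf' _ _ fun p hp => (sample_bounds p hp).2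
end

section
/- Range bound for the coBüchi progress measure: in a finite coBüchi game, if a progress measure ρ : V → ℕ ∪ {⊤} is the least fixpoint of the lifting rules (ρ(v) ≥ pr(v)+1 for v ∈ B, ρ(v) ≥ pr(v) otherwise, with pr(v) the min of ρ over successors for Player-0 vertices and the max for Player-1 vertices) and ρ(v) = m ∈ ℕ for some vertex v, then Player 1 has a positional strategy from v guaranteeing that at least m (counted with multiplicity along the play prefix) visits to coBüchi vertices in B occur; consequently if m > |B| then some coBüchi vertex lies on a reachable cycle consistent with this strategy, and v is winning for Player 1. Hence the least fixpoint values on Player-0's winning region are at most |B|. -/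
open Classical in
/-- The value `pr ρ v`: min of `ρ` over successors for Player-0 vertices,
max over successors for Player-1 vertices (values in `ℕ∞`). -/
noncomputable def pr {V : Type*} (V0 : Set V) (E : Set (V × V))
    (ρ : V → ℕ∞) (v : V) : ℕ∞ :=
  if v ∈ V0 then ⨅ w ∈ {w | (v, w) ∈ E}, ρ w
  else ⨆ w ∈ {w | (v, w) ∈ E}, ρ w

/-- Validity of a coBüchi progress measure: `ρ v ≥ pr v + 1` on the coBüchi
set `B` and `ρ v ≥ pr v` elsewhere. -/
def ValidPM {V : Type*} [DecidableEq V] (V0 : Set V) (E : Set (V × V))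
    (B : Finset V) (ρ : V → ℕ∞) : Prop :=
  ∀ v, (if v ∈ B then pr V0 E ρ v + 1 else pr V0 E ρ v) ≤ ρ v

/-!
The least valid measure `ρ` is the supremum of the Kleene approximants `approx k = lift^[k] ⊥`;
exchanging `⨆` over stages with `⨅` over the finitely many successors is where finiteness of the
graph enters. Fix `m`, let `cap u = min (ρ u) m` and let `rank u` be the first stage `k` with
`cap u ≤ approx k u`. Player 1 moves from `u` to a successor maximising `approx (rank u - 1)`.
Along every consistent move `u → w` we get `cap u ≤ cap w + [u ∈ B]`, and if `u ∉ B` then `cap`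
grows or stays while `rank` drops. This lexicographic descent forces a visit to `B` from every
vertex of positive `cap`, and iterating it forces `cap v` visits.

If `m > |B|`, some coBüchi vertex repeats among the first `m` visits; cutting out the loop between
the repetitions gives a consistent play with fewer visits, so no consistent play visits `B` only
finitely often. Playing this strategy against a winning strategy of Player 0 then shows
`ρ v ≤ |B|` on Player 0's winning region.
-/

namespace CoBuchi

section Loops

variable {α : Type*} {R : α → α → Prop}

theorem exists_chain_ncard_lt_of_eq {ξ : ℕ → α} (hξ : ∀ t, R (ξ t) (ξ (t + 1))) {i j : ℕ}
    (hij : i < j) (heq : ξ i = ξ j) {s : Set α} (hfin : {t | ξ t ∈ s}.Finite) (hi : ξ i ∈ s) :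
    ∃ ξ' : ℕ → α, ξ' 0 = ξ 0 ∧ (∀ t, R (ξ' t) (ξ' (t + 1))) ∧
      {t | ξ' t ∈ s}.Finite ∧ {t | ξ' t ∈ s}.ncard < {t | ξ t ∈ s}.ncard := by
  -- `θ` skips the positions `i, …, j - 1` of the loop
  set θ : ℕ → ℕ := fun t => if t < i then t else t + (j - i) with hθ
  have hθinj : θ.Injective := StrictMono.injective fun a b hab => by
    simp only [hθ]; split_ifs <;> omega
  have hθi : i ∉ Set.range θ := by
    rintro ⟨t, ht⟩; simp only [hθ] at ht; split_ifs at ht <;> omega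
  have hmove : ∀ t, ξ (θ (t + 1)) = ξ (θ t + 1) := by
    intro t
    simp only [hθ]
    split_ifs with h1 h2 h2
    · rfl
    · omega
    · rw [show t + 1 + (j - i) = j by omega, ← heq, show i = t + 1 by omega]
    · rw [Nat.add_right_comm]
  refine ⟨ξ ∘ θ, ?_, fun t => by simpa only [Function.comp_apply, hmove] using hξ (θ t), ?_⟩
  · simp only [Function.comp_apply, hθ]
    split_ifs with h
    · rfl
    · obtain rfl : i = 0 := by omega
      rw [Nat.sub_zero, zero_add, heq]
  · have hpre : {t | (ξ ∘ θ) t ∈ s} = θ ⁻¹' {t | ξ t ∈ s} := rfl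
    refine ⟨hpre ▸ hfin.preimage hθinj.injOn, ?_⟩
    calc {t | (ξ ∘ θ) t ∈ s}.ncard
        = (θ '' (θ ⁻¹' {t | ξ t ∈ s})).ncard := by rw [hpre, Set.ncard_image_of_injective _ hθinj]
      _ ≤ ({t | ξ t ∈ s} \ {i}).ncard := by
          refine Set.ncard_le_ncard ?_ hfin.sdiff
          rintro _ ⟨t, ht, rfl⟩
          exact ⟨ht, fun h => hθi ⟨t, h⟩⟩
      _ < {t | ξ t ∈ s}.ncard := Set.ncard_sdiff_singleton_lt_of_mem hi hfin

theorem infinite_setOf_mem_of_card_lt_count [DecidableEq α] (B : Finset α) (v : α)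
    (h : ∀ ξ : ℕ → α, ξ 0 = v → (∀ t, R (ξ t) (ξ (t + 1))) →
      ∃ t, B.card < Nat.count (fun i => ξ i ∈ B) t)
    {ξ : ℕ → α} (h0 : ξ 0 = v) (hξ : ∀ t, R (ξ t) (ξ (t + 1))) : {t | ξ t ∈ B}.Infinite := by
  intro hfin
  induction hn : {t | ξ t ∈ B}.ncard using Nat.strong_induction_on generalizing ξ with
  | _ n ih =>
    obtain ⟨T, hT⟩ := h ξ h0 hξ
    rw [Nat.count_eq_card_filter_range] at hT
    obtain ⟨a, ha, b, hb, hab, heq⟩ := Finset.exists_ne_map_eq_of_card_lt_of_maps_to hT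
      (fun i hi => (Finset.mem_filter.mp hi).2)
    have hloop : ∀ {i j}, i < j → ξ i = ξ j → ξ i ∈ B → False := fun hij heq hi => by
      obtain ⟨ξ', h0', hξ', hfin', hlt⟩ := exists_chain_ncard_lt_of_eq hξ hij heq hfin hi
      exact ih _ (hn ▸ hlt) (h0'.trans h0) hξ' hfin' rfl
    rcases hab.lt_or_gt with hlt | hlt
    · exact hloop hlt heq (Finset.mem_filter.mp ha).2
    · exact hloop hlt heq.symm (Finset.mem_filter.mp hb).2

end Loops

section Outcome

variable {α : Type*} (p : Set α) (σ : List α → α → α) (τ : α → α) (v : α)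

open Classical in
/-- The pair (history before step `n`, position at step `n`). -/
noncomputable def outcomeAux : ℕ → List α × α
  | 0 => ([], v)
  | n + 1 =>
    ((outcomeAux n).1 ++ [(outcomeAux n).2],
      if (outcomeAux n).2 ∈ p then σ (outcomeAux n).1 (outcomeAux n).2 else τ (outcomeAux n).2)

theorem outcomeAux_fst (n : ℕ) :
    (outcomeAux p σ τ v n).1 = List.ofFn fun j : Fin n => (outcomeAux p σ τ v j).2 := by
  induction n with
  | zero => rfl
  | succ n ih =>
    simp only [List.ofFn_succ_last, Fin.val_castSucc, Fin.val_last, ← ih]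
    rfl

open Classical in
theorem exists_outcome : ∃ ξ : ℕ → α, ξ 0 = v ∧ ∀ i, ξ (i + 1) =
    if ξ i ∈ p then σ (List.ofFn fun j : Fin i => ξ j) (ξ i) else τ (ξ i) := by
  refine ⟨fun n => (outcomeAux p σ τ v n).2, rfl, fun i => ?_⟩
  simp only [← outcomeAux_fst]
  rfl

end Outcome

section Cap

variable {V : Type*} (ρ : V → ℕ∞) (m : ℕ)

noncomputable def cap (u : V) : ℕ := (min (ρ u) m).toNat

theorem coe_cap (u : V) : (cap ρ m u : ℕ∞) = min (ρ u) m :=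
  ENat.natCast_toNat (ne_top_of_le_ne_top (ENat.natCast_ne_top m) (min_le_right _ _))

theorem cap_eq {u : V} (h : (m : ℕ∞) ≤ ρ u) : cap ρ m u = m := by
  simp [cap, min_eq_right h]

theorem cap_le (u : V) : cap ρ m u ≤ m := by
  have := (coe_cap ρ m u).trans_le (min_le_right _ _)
  exact_mod_cast this

end Cap

variable {V : Type*} (V0 : Set V) (E : Set (V × V))

theorem pr_mono : Monotone (pr V0 E) := by
  intro ρ ρ' h v
  unfold pr
  split
  · exact iInf₂_mono fun w _ => h w
  · exact iSup₂_mono fun w _ => h w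

theorem pr_iSup_of_monotone [Finite V] {f : ℕ → V → ℕ∞} (hf : Monotone f) (v : V) :
    pr V0 E (⨆ k, f k) v = ⨆ k, pr V0 E (f k) v := by
  unfold pr
  split
  · simpa only [iSup_apply] using
      ((Set.toFinite _).iSup_biInf_of_monotone fun w _ _ _ hkl => hf hkl w).symm
  · simp only [iSup_apply]
    rw [iSup_comm]
    exact iSup_congr fun w => iSup_comm

variable [DecidableEq V] (B : Finset V)

noncomputable def lift (ρ : V → ℕ∞) (v : V) : ℕ∞ :=
  if v ∈ B then pr V0 E ρ v + 1 else pr V0 E ρ v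

theorem lift_eq_pr_add (ρ : V → ℕ∞) (v : V) :
    lift V0 E B ρ v = pr V0 E ρ v + if v ∈ B then 1 else 0 := by
  unfold lift; split_ifs <;> simp

theorem lift_mono : Monotone (lift V0 E B) := fun _ _ h v => by
  simp only [lift_eq_pr_add]
  gcongr
  exact pr_mono V0 E h v

theorem lift_iSup_of_monotone [Finite V] {f : ℕ → V → ℕ∞} (hf : Monotone f) (v : V) :
    lift V0 E B (⨆ k, f k) v = ⨆ k, lift V0 E B (f k) v := by
  simp only [lift_eq_pr_add, pr_iSup_of_monotone V0 E hf, ENat.iSup_add]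

noncomputable def approx (k : ℕ) : V → ℕ∞ := (lift V0 E B)^[k] ⊥

theorem approx_succ (k : ℕ) : approx V0 E B (k + 1) = lift V0 E B (approx V0 E B k) :=
  Function.iterate_succ_apply' _ _ _

theorem monotone_approx : Monotone (approx V0 E B) :=
  (lift_mono V0 E B).monotone_iterate_of_le_map bot_le

theorem approx_le {ρ : V → ℕ∞} (hρ : ValidPM V0 E B ρ) (k : ℕ) : approx V0 E B k ≤ ρ := by
  induction k with
  | zero => exact bot_le
  | succ k ih => rw [approx_succ]; exact (lift_mono V0 E B ih).trans hρ

theorem validPM_iSup_approx [Finite V] : ValidPM V0 E B (⨆ k, approx V0 E B k) := by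
  intro v
  change lift V0 E B _ v ≤ _
  rw [lift_iSup_of_monotone V0 E B (monotone_approx V0 E B), iSup_apply]
  exact iSup_le fun k => by rw [← approx_succ]; exact le_iSup (approx V0 E B · v) (k + 1)

theorem exists_le_approx [Finite V] {ρ : V → ℕ∞} (hleast : ∀ ρ', ValidPM V0 E B ρ' → ρ ≤ ρ')
    {n : ℕ} {v : V} (hn : (n : ℕ∞) ≤ ρ v) : ∃ k, (n : ℕ∞) ≤ approx V0 E B k v := by
  have hsup : (n : ℕ∞) ≤ ⨆ k, approx V0 E B k v := by
    simpa only [iSup_apply] using hn.trans (hleast _ (validPM_iSup_approx V0 E B) v)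
  cases n with
  | zero => exact ⟨0, by simp⟩
  | succ c =>
    have hc : (c : ℕ∞) < (c + 1 : ℕ) := by exact_mod_cast c.lt_succ_self
    obtain ⟨k, hk⟩ := lt_iSup_iff.mp (hc.trans_le hsup)
    exact ⟨k, by simpa using Order.add_one_le_of_lt hk⟩

def ConsistentMove (τ : V → V) (u w : V) : Prop := (u, w) ∈ E ∧ (u ∉ V0 → w = τ u)

section Strategy

variable (ρ : V → ℕ∞) (m : ℕ)

noncomputable def rank (u : V) : ℕ := sInf {k | (cap ρ m u : ℕ∞) ≤ approx V0 E B k u}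

variable {V0 E B ρ m}

theorem rank_le {k : ℕ} {u : V} (h : (cap ρ m u : ℕ∞) ≤ approx V0 E B k u) :
    rank V0 E B ρ m u ≤ k :=
  Nat.sInf_le h

variable [Finite V]

theorem cap_le_approx_rank (hleast : ∀ ρ', ValidPM V0 E B ρ' → ρ ≤ ρ') (u : V) :
    (cap ρ m u : ℕ∞) ≤ approx V0 E B (rank V0 E B ρ m u) u :=
  Nat.sInf_mem (exists_le_approx V0 E B hleast ((coe_cap ρ m u).trans_le (min_le_left _ _)))

theorem rank_pos (hleast : ∀ ρ', ValidPM V0 E B ρ' → ρ ≤ ρ') {u : V} (h : 0 < cap ρ m u) :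
    0 < rank V0 E B ρ m u := by
  by_contra h0
  have := cap_le_approx_rank (m := m) hleast u
  simp_all [approx]

variable (V0 E B ρ m)

noncomputable def strategy (hE : ∀ v, ∃ w, (v, w) ∈ E) (u : V) : V :=
  (Set.exists_max_image {w | (u, w) ∈ E} (approx V0 E B (rank V0 E B ρ m u - 1))
    (Set.toFinite _) (hE u)).choose

variable (hE : ∀ v, ∃ w, (v, w) ∈ E)

theorem strategy_mem (u : V) : (u, strategy V0 E B ρ m hE u) ∈ E :=
  (Set.exists_max_image _ _ (Set.toFinite _) (hE u)).choose_spec.1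

theorem approx_le_approx_strategy {u w : V} (hw : (u, w) ∈ E) :
    approx V0 E B (rank V0 E B ρ m u - 1) w ≤
      approx V0 E B (rank V0 E B ρ m u - 1) (strategy V0 E B ρ m hE u) :=
  (Set.exists_max_image _ _ (Set.toFinite _) (hE u)).choose_spec.2 w hw

variable {V0 E B ρ m hE}

theorem pr_approx_le_of_consistentMove {u w : V}
    (hmove : ConsistentMove V0 E (strategy V0 E B ρ m hE) u w) :
    pr V0 E (approx V0 E B (rank V0 E B ρ m u - 1)) u ≤
      approx V0 E B (rank V0 E B ρ m u - 1) w := by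
  unfold pr
  split
  · exact iInf₂_le w hmove.1
  · rw [hmove.2 ‹_›]
    exact iSup₂_le fun w' hw' => approx_le_approx_strategy V0 E B ρ m hE hw'

theorem cap_le_approx_of_consistentMove (hleast : ∀ ρ', ValidPM V0 E B ρ' → ρ ≤ ρ') {u w : V}
    (hcap : 0 < cap ρ m u) (hmove : ConsistentMove V0 E (strategy V0 E B ρ m hE) u w) :
    (cap ρ m u : ℕ∞) ≤ approx V0 E B (rank V0 E B ρ m u - 1) w + if u ∈ B then 1 else 0 := by
  have hrank := Nat.sub_add_cancel (rank_pos hleast hcap)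
  calc (cap ρ m u : ℕ∞)
      ≤ approx V0 E B (rank V0 E B ρ m u - 1 + 1) u := by
        rw [hrank]; exact cap_le_approx_rank hleast u
    _ = pr V0 E (approx V0 E B (rank V0 E B ρ m u - 1)) u + if u ∈ B then 1 else 0 := by
        rw [approx_succ, lift_eq_pr_add]
    _ ≤ _ := by gcongr; exact pr_approx_le_of_consistentMove hmove

theorem cap_le_cap_add_of_consistentMove (hvalid : ValidPM V0 E B ρ)
    (hleast : ∀ ρ', ValidPM V0 E B ρ' → ρ ≤ ρ') {u w : V}
    (hmove : ConsistentMove V0 E (strategy V0 E B ρ m hE) u w) :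
    cap ρ m u ≤ cap ρ m w + if u ∈ B then 1 else 0 := by
  rcases Nat.eq_zero_or_pos (cap ρ m u) with hcap | hcap
  · simp [hcap]
  have hρ : (cap ρ m u : ℕ∞) ≤ ρ w + if u ∈ B then 1 else 0 :=
    (cap_le_approx_of_consistentMove hleast hcap hmove).trans
      (by gcongr; exact approx_le V0 E B hvalid _ w)
  have hm : (cap ρ m u : ℕ∞) ≤ m + if u ∈ B then 1 else 0 :=
    ((coe_cap ρ m u).trans_le (min_le_right _ _)).trans le_self_add
  have := le_min hρ hm
  rw [min_add_add_right, ← coe_cap] at this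
  split_ifs at this ⊢ <;> exact_mod_cast this

theorem rank_lt_of_consistentMove (hleast : ∀ ρ', ValidPM V0 E B ρ' → ρ ≤ ρ') {u w : V}
    (hmove : ConsistentMove V0 E (strategy V0 E B ρ m hE) u w) (hu : u ∉ B)
    (hcap : 0 < cap ρ m u) (heq : cap ρ m w = cap ρ m u) : rank V0 E B ρ m w < rank V0 E B ρ m u := by
  have h := cap_le_approx_of_consistentMove hleast hcap hmove
  rw [if_neg hu, add_zero, ← heq] at h
  exact (rank_le h).trans_lt (Nat.sub_lt (rank_pos hleast hcap) one_pos)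

variable (hvalid : ValidPM V0 E B ρ) (hleast : ∀ ρ', ValidPM V0 E B ρ' → ρ ≤ ρ')
include hvalid hleast

theorem exists_succ_le_count {n : ℕ}
    (ih : ∀ ξ : ℕ → V, (∀ i, ConsistentMove V0 E (strategy V0 E B ρ m hE) (ξ i) (ξ (i + 1))) →
      n ≤ cap ρ m (ξ 0) → ∃ t, n ≤ Nat.count (fun i => ξ i ∈ B) t)
    (ξ : ℕ → V) (hξ : ∀ i, ConsistentMove V0 E (strategy V0 E B ρ m hE) (ξ i) (ξ (i + 1)))
    (hn : n + 1 ≤ cap ρ m (ξ 0)) : ∃ t, n + 1 ≤ Nat.count (fun i => ξ i ∈ B) t := by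
  have hcap : cap ρ m (ξ 0) ≤ cap ρ m (ξ 1) + if ξ 0 ∈ B then 1 else 0 :=
    cap_le_cap_add_of_consistentMove hvalid hleast (hξ 0)
  by_cases hB : ξ 0 ∈ B
  · have hn' : n ≤ cap ρ m (ξ 1) := by rw [if_pos hB] at hcap; omega
    obtain ⟨t, ht⟩ := ih (fun i => ξ (i + 1)) (fun i => hξ (i + 1)) hn'
    exact ⟨t + 1, by rw [Nat.count_succ', if_pos hB]; omega⟩
  · have hle : cap ρ m (ξ 0) ≤ cap ρ m (ξ 1) := by rwa [if_neg hB, add_zero] at hcap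
    obtain ⟨t, ht⟩ :=
      exists_succ_le_count ih (fun i => ξ (i + 1)) (fun i => hξ (i + 1)) (hn.trans hle)
    exact ⟨t + 1, by rw [Nat.count_succ', if_neg hB]; omega⟩
termination_by (m - cap ρ m (ξ 0), rank V0 E B ρ m (ξ 0))
decreasing_by
  simp only [zero_add]
  rcases hle.lt_or_eq with hlt | heq
  · exact Prod.Lex.left _ _ (by have := cap_le ρ m (ξ 1); omega)
  · rw [← heq]
    exact Prod.Lex.right _ (rank_lt_of_consistentMove hleast (hξ 0) hB (by omega) heq.symm)

theorem exists_le_count (n : ℕ) {ξ : ℕ → V}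
    (hξ : ∀ i, ConsistentMove V0 E (strategy V0 E B ρ m hE) (ξ i) (ξ (i + 1)))
    (hn : n ≤ cap ρ m (ξ 0)) : ∃ t, n ≤ Nat.count (fun i => ξ i ∈ B) t := by
  induction n generalizing ξ with
  | zero => exact ⟨0, le_rfl⟩
  | succ n ih => exact exists_succ_le_count hvalid hleast (fun _ hξ hn => ih hξ hn) ξ hξ hn

theorem infinite_setOf_mem_of_card_lt (hB : B.card < m) {ξ : ℕ → V}
    (hξ : ∀ i, ConsistentMove V0 E (strategy V0 E B ρ m hE) (ξ i) (ξ (i + 1)))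
    (hm : (m : ℕ∞) ≤ ρ (ξ 0)) : {t | ξ t ∈ B}.Infinite :=
  infinite_setOf_mem_of_card_lt_count B (ξ 0)
    (fun _ h0 hξ' => (exists_le_count hvalid hleast m hξ' (by rw [h0, cap_eq ρ m hm])).imp
      fun _ => hB.trans_le) rfl hξ

end Strategy

end CoBuchi

/-- range bound for the coBüchi progress measure.  If `ρ` is the
least valid progress measure and `ρ v = m ∈ ℕ`, then Player 1 has a positional
strategy from `v` forcing at least `m` visits (counted with multiplicity along
a play prefix) to coBüchi vertices; consequently if `m > |B|` then `v` is
winning for Player 1 (some coBüchi vertex is visited infinitely often), and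
hence on Player 0's winning region the least-fixpoint values are at most
`|B|`. -/
theorem stmt13 {V : Type*} [Fintype V] [DecidableEq V]
    (V0 V1 : Set V) (hpart : ∀ v, v ∈ V0 ↔ v ∉ V1)
    (E : Set (V × V)) (hE : ∀ v, ∃ w, (v, w) ∈ E)
    (B : Finset V)
    (ρ : V → ℕ∞)
    (hvalid : ValidPM V0 E B ρ)
    (hleast : ∀ ρ', ValidPM V0 E B ρ' → ρ ≤ ρ') :
    (∀ (v : V) (m : ℕ), ρ v = (m : ℕ∞) →
      ∃ τ : V → V, (∀ u, (u, τ u) ∈ E) ∧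
        ∀ ξ : ℕ → V, ξ 0 = v → (∀ i, (ξ i, ξ (i + 1)) ∈ E) →
          (∀ i, ξ i ∈ V1 → ξ (i + 1) = τ (ξ i)) →
          ∃ k, m ≤ ((Finset.range k).filter (fun i => ξ i ∈ B)).card) ∧
    (∀ (v : V) (m : ℕ), ρ v = (m : ℕ∞) → B.card < m →
      ∃ τ : V → V, (∀ u, (u, τ u) ∈ E) ∧
        ∀ ξ : ℕ → V, ξ 0 = v → (∀ i, (ξ i, ξ (i + 1)) ∈ E) →
          (∀ i, ξ i ∈ V1 → ξ (i + 1) = τ (ξ i)) →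
          {i | ξ i ∈ B}.Infinite) ∧
    (∀ v : V,
      (∃ σ : List V → V → V, (∀ hl u, u ∈ V0 → (u, σ hl u) ∈ E) ∧
        ∀ ξ : ℕ → V, ξ 0 = v → (∀ i, (ξ i, ξ (i + 1)) ∈ E) →
          (∀ i, ξ i ∈ V0 →
            ξ (i + 1) = σ (List.ofFn fun j : Fin i => ξ j) (ξ i)) →
          {i | ξ i ∈ B}.Finite) →
      ρ v ≤ (B.card : ℕ∞)) := by
  open CoBuchi in
  have hmove (m : ℕ) {ξ : ℕ → V} (he : ∀ i, (ξ i, ξ (i + 1)) ∈ E)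
      (hτ : ∀ i, ξ i ∈ V1 → ξ (i + 1) = strategy V0 E B ρ m hE (ξ i)) (i : ℕ) :
      ConsistentMove V0 E (strategy V0 E B ρ m hE) (ξ i) (ξ (i + 1)) :=
    ⟨he i, fun h => hτ i (not_not.mp (mt (hpart _).2 h))⟩
  refine ⟨fun v m hρ => ⟨_, strategy_mem V0 E B ρ m hE, fun ξ h0 he hτ => ?_⟩,
    fun v m hρ hB => ⟨_, strategy_mem V0 E B ρ m hE, fun ξ h0 he hτ => ?_⟩,
    fun v hwin => not_lt.mp fun hlt => ?_⟩
  · simpa only [Nat.count_eq_card_filter_range] using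
      exists_le_count hvalid hleast m (hmove m he hτ) (by rw [h0, cap_eq ρ m hρ.ge])
  · exact infinite_setOf_mem_of_card_lt hvalid hleast hB (hmove m he hτ) (h0 ▸ hρ.ge)
  · obtain ⟨σ, hσE, hσ⟩ := hwin
    obtain ⟨ξ, h0, hnext⟩ := exists_outcome V0 σ (strategy V0 E B ρ (B.card + 1) hE) v
    have he (i : ℕ) : (ξ i, ξ (i + 1)) ∈ E := by
      rw [hnext]
      split_ifs with h
      exacts [hσE _ _ h, strategy_mem V0 E B ρ _ hE _]
    refine infinite_setOf_mem_of_card_lt hvalid hleast B.card.lt_succ_self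
      (fun i => ⟨he i, fun h => by rw [hnext, if_neg h]⟩) ?_
      (hσ ξ h0 he fun i h => by rw [hnext, if_pos h])
    rw [h0]
    exact_mod_cast Order.add_one_le_of_lt hlt
end
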